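/- arXiv:0704.0924 — 8 statements merged into one kernel-verified Lean document; each statement's English description precedes it below -/
import Mathlib

section
/- Let p be an odd prime and let B be a nonzero element of ZMod p. Then the double sum over all t in ZMod p and all x in ZMod p of χ(x³ + B·t²) equals 0. -/
theorem first_moment_CM_family_vanishes (p : ℕ) [Fact p.Prime] (hp : p ≠ 2)
    (B : ZMod p) (hB : B ≠ 0) :
    ∑ t : ZMod p, ∑ x : ZMod p, quadraticChar (ZMod p) (x ^ 3 + B * t ^ 2) = 0 := by
  have hchar2 : ringChar (ZMod p) ≠ 2 := by
    rw [ZMod.ringChar_zmod_n]; exact hp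
  set χ := quadraticChar (ZMod p) with hχ
  -- key: for c ≠ 0, sum over t ≠ 0 of χ (t*c + B) = -χ B
  have key : ∀ c : ZMod p, c ≠ 0 →
      ∑ t ∈ Finset.univ.erase (0 : ZMod p), χ (t * c + B) = -χ B := by
    intro c hc
    have hinj : Function.Injective (fun t : ZMod p => t * c + B) := by
      intro a b h
      simp only [add_left_inj] at h
      exact mul_right_cancel₀ hc h
    have hbij := Finite.injective_iff_bijective.mp hinj
    have h1 : ∑ t : ZMod p, χ (t * c + B) = 0 := by
      rw [Fintype.sum_bijective _ hbij _ χ (fun t => rfl)]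
      exact quadraticChar_sum_zero hchar2
    have h2 := Finset.sum_erase_add Finset.univ (fun t => χ (t * c + B))
      (Finset.mem_univ (0 : ZMod p))
    simp only [zero_mul, zero_add] at h2
    linarith [h1, h2]
  -- t = 0 inner sum vanishes
  have h0 : ∑ x : ZMod p, χ (x ^ 3 + B * 0 ^ 2) = 0 := by
    have : ∀ x : ZMod p, χ (x ^ 3 + B * 0 ^ 2) = χ x := by
      intro x
      rcases eq_or_ne x 0 with h | h
      · simp [h]
      · have : x ^ 3 + B * 0 ^ 2 = x * x ^ 2 := by ring
        rw [this, map_mul, quadraticChar_sq_one' h, mul_one]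
    rw [Finset.sum_congr rfl (fun x _ => this x)]
    exact quadraticChar_sum_zero hchar2
  -- for t ≠ 0, substitute x ↦ t * x
  have hsub : ∀ t : ZMod p, t ≠ 0 →
      ∑ x : ZMod p, χ (x ^ 3 + B * t ^ 2) = ∑ x : ZMod p, χ (t * x ^ 3 + B) := by
    intro t ht
    have hinj : Function.Injective (fun x : ZMod p => t * x) :=
      fun a b h => mul_left_cancel₀ ht h
    have hbij := Finite.injective_iff_bijective.mp hinj
    rw [eq_comm]
    refine Fintype.sum_bijective _ hbij _ _ (fun x => ?_)
    have : (t * x) ^ 3 + B * t ^ 2 = (t * x ^ 3 + B) * t ^ 2 := by ring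
    rw [this, map_mul, quadraticChar_sq_one' ht, mul_one]
  -- split off t = 0
  have hsplit := Finset.sum_erase_add Finset.univ
    (fun t => ∑ x : ZMod p, χ (x ^ 3 + B * t ^ 2)) (Finset.mem_univ (0 : ZMod p))
  rw [← hsplit]
  beta_reduce
  rw [h0, add_zero]
  rw [Finset.sum_congr rfl (fun t ht => hsub t (Finset.ne_of_mem_erase ht))]
  rw [Finset.sum_comm]
  -- now evaluate the sum over x of (sum over t ≠ 0 of χ (t * x^3 + B))
  have hx : ∀ x : ZMod p, x ≠ 0 →
      ∑ t ∈ Finset.univ.erase (0 : ZMod p), χ (t * x ^ 3 + B) = -χ B := by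
    intro x hx
    exact key (x ^ 3) (pow_ne_zero 3 hx)
  have hsplit2 := Finset.sum_erase_add Finset.univ
    (fun x => ∑ t ∈ Finset.univ.erase (0 : ZMod p), χ (t * x ^ 3 + B))
    (Finset.mem_univ (0 : ZMod p))
  rw [← hsplit2]
  beta_reduce
  rw [Finset.sum_congr rfl (fun x hxm => hx x (Finset.ne_of_mem_erase hxm))]
  have hx0 : ∑ t ∈ Finset.univ.erase (0 : ZMod p), χ (t * (0 : ZMod p) ^ 3 + B)
      = ((Finset.univ.erase (0 : ZMod p)).card : ℤ) * χ B := by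
    simp [Finset.sum_const, nsmul_eq_mul]
  rw [hx0, Finset.sum_const, nsmul_eq_mul]
  ring
end

section
/- Let p be a prime with p ≡ 1 (mod 3) and let B be a nonzero element of ZMod p. Then the sum over all t in ZMod p of the square of (the sum over all x in ZMod p of χ(x³ + B·t²)) equals 2p² − 2p. -/
open Finset
variable {p : ℕ} [Fact p.Prime]

private lemma sq_count (hc : ringChar (ZMod p) ≠ 2) (a : ZMod p) :
    (((univ.filter fun t : ZMod p => t ^ 2 = a).card : ℤ)) =
      quadraticChar (ZMod p) a + 1 := by
  have := quadraticChar_card_sqrts hc a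
  rw [Set.toFinset_setOf] at this
  exact_mod_cast this

private lemma sum_sq_param (hc : ringChar (ZMod p) ≠ 2) (f : ZMod p → ℤ) :
    ∑ t : ZMod p, f (t ^ 2) =
      ∑ a : ZMod p, ((quadraticChar (ZMod p) a : ℤ) + 1) * f a := by
  rw [← Finset.sum_fiberwise_of_maps_to (g := fun t : ZMod p => t ^ 2)
    (fun x _ => Finset.mem_univ (x ^ 2)) (fun t => f (t ^ 2))]
  refine Finset.sum_congr rfl fun a _ => ?_
  rw [← sq_count hc a]
  rw [Finset.sum_congr rfl (fun t ht => by
    rw [(Finset.mem_filter.mp ht).2]), Finset.sum_const, nsmul_eq_mul]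

private lemma shift_sum_ne (hc : ringChar (ZMod p) ≠ 2) {d : ZMod p} (hd : d ≠ 0) :
    ∑ b : ZMod p, (quadraticChar (ZMod p) b * quadraticChar (ZMod p) (b + d) : ℤ) = -1 := by
  have hnd : -d ≠ 0 := neg_ne_zero.mpr hd
  have h1 : ∑ b : ZMod p, (quadraticChar (ZMod p) b * quadraticChar (ZMod p) (b + d) : ℤ)
      = ∑ x : ZMod p, (quadraticChar (ZMod p) (-d * x) *
          quadraticChar (ZMod p) (-d * x + d) : ℤ) :=
    (Fintype.sum_equiv (Equiv.mulLeft₀ (-d) hnd) _ _ (fun x => rfl)).symm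
  rw [h1]
  have h2 : ∀ x : ZMod p,
      (quadraticChar (ZMod p) (-d * x) * quadraticChar (ZMod p) (-d * x + d) : ℤ)
      = quadraticChar (ZMod p) (-1) *
          (quadraticChar (ZMod p) x * quadraticChar (ZMod p) (1 - x)) := by
    intro x
    have e : -d * x + d = d * (1 - x) := by ring
    rw [e, map_mul, map_mul]
    have : quadraticChar (ZMod p) (-d) * quadraticChar (ZMod p) d
        = quadraticChar (ZMod p) (-1) := by
      rw [← map_mul]
      have : -d * d = -1 * d ^ 2 := by ring
      rw [this, map_mul, quadraticChar_sq_one' hd, mul_one]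
    linear_combination (quadraticChar (ZMod p) x * quadraticChar (ZMod p) (1 - x) : ℤ) * this
  simp_rw [h2]
  rw [← Finset.mul_sum]
  have hJ : ∑ x : ZMod p, (quadraticChar (ZMod p) x * quadraticChar (ZMod p) (1 - x) : ℤ)
      = jacobiSum (quadraticChar (ZMod p)) (quadraticChar (ZMod p)) := rfl
  rw [hJ]
  have hq : (quadraticChar (ZMod p))⁻¹ = quadraticChar (ZMod p) :=
    (quadraticChar_isQuadratic (ZMod p)).inv
  have : jacobiSum (quadraticChar (ZMod p)) (quadraticChar (ZMod p)) =
      -(quadraticChar (ZMod p)) (-1) := by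
    rw [← jacobiSum_nontrivial_inv (quadraticChar_ne_one hc), hq]
  rw [this]
  have h1' : quadraticChar (ZMod p) (-1) * quadraticChar (ZMod p) (-1) = 1 := by
    rw [← map_mul]; norm_num
  linear_combination -h1'

private lemma shift_sum (hc : ringChar (ZMod p) ≠ 2) (a c : ZMod p) :
    ∑ b : ZMod p, (quadraticChar (ZMod p) (b + a) * quadraticChar (ZMod p) (b + c) : ℤ)
      = if a = c then (p : ℤ) - 1 else -1 := by
  split_ifs with h
  · subst h
    have h1 : ∀ b : ZMod p,
        (quadraticChar (ZMod p) (b + a) * quadraticChar (ZMod p) (b + a) : ℤ)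
          = 1 - (if b = -a then (1 : ℤ) else 0) := by
      intro b
      by_cases hb : b = -a
      · simp [hb]
      · have : b + a ≠ 0 := fun hba => hb (by linear_combination hba)
        rw [← map_mul, ← sq]
        have := quadraticChar_sq_one' (F := ZMod p) this
        simp [this, hb]
    simp_rw [h1]
    rw [Finset.sum_sub_distrib, Finset.sum_const, Finset.sum_ite_eq' Finset.univ (-a) (fun _ => (1:ℤ))]
    simp [ZMod.card]
  · have hd : c - a ≠ 0 := sub_ne_zero.mpr (Ne.symm h)
    have := Fintype.sum_equiv (Equiv.addRight a)
      (fun x : ZMod p => (quadraticChar (ZMod p) (x + a) * quadraticChar (ZMod p) (x + c) : ℤ))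
      (fun y : ZMod p => (quadraticChar (ZMod p) y * quadraticChar (ZMod p) (y + (c - a)) : ℤ))
      (fun x => by simp only [Equiv.coe_addRight]; ring_nf)
    rw [this, shift_sum_ne hc hd]

private def gg (p : ℕ) [Fact p.Prime] (u : ZMod p) : ℤ :=
  ∑ x : ZMod p, quadraticChar (ZMod p) (x ^ 3 + u)

private lemma gg_cube_mul {m : ZMod p} (hm : m ≠ 0) (u : ZMod p) :
    gg p (m ^ 3 * u) = quadraticChar (ZMod p) m * gg p u := by
  unfold gg
  rw [Finset.mul_sum]
  refine (Fintype.sum_bijective (fun y : ZMod p => m * y)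
    (mulLeft_bijective₀ m hm)
    (fun y : ZMod p => (quadraticChar (ZMod p) m : ℤ) * quadraticChar (ZMod p) (y ^ 3 + u))
    (fun x : ZMod p => (quadraticChar (ZMod p) (x ^ 3 + m ^ 3 * u) : ℤ)) ?_).symm
  intro y
  have e : (m * y) ^ 3 + m ^ 3 * u = m ^ 3 * (y ^ 3 + u) := by ring
  simp only [e, map_mul, map_pow]
  rcases quadraticChar_dichotomy hm with h | h <;> rw [h] <;> push_cast <;> ring

private lemma hzero (hc : ringChar (ZMod p) ≠ 2) :
    ∑ u : ZMod p, (quadraticChar (ZMod p) u : ℤ) * (gg p u) ^ 2 = 0 := by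
  obtain ⟨m, hm⟩ := quadraticChar_exists_neg_one hc
  have hm0 : m ≠ 0 := by
    intro h; rw [h] at hm; simp at hm
  have key : ∀ u : ZMod p,
      (quadraticChar (ZMod p) (m ^ 3 * u) : ℤ) * (gg p (m ^ 3 * u)) ^ 2
        = -((quadraticChar (ZMod p) u : ℤ) * (gg p u) ^ 2) := by
    intro u
    rw [gg_cube_mul hm0, map_mul, map_pow, hm]
    ring
  have hre := Fintype.sum_equiv (Equiv.mulLeft₀ (m ^ 3) (pow_ne_zero 3 hm0))
    (fun u : ZMod p => (quadraticChar (ZMod p) (m ^ 3 * u) : ℤ) * (gg p (m ^ 3 * u)) ^ 2)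
    (fun u : ZMod p => (quadraticChar (ZMod p) u : ℤ) * (gg p u) ^ 2)
    (fun u => rfl)
  simp_rw [key] at hre
  rw [Finset.sum_neg_distrib] at hre
  linarith

private lemma exists_omega (hp3 : p % 3 = 1) :
    ∃ w : ZMod p, w ^ 3 = 1 ∧ w ≠ 1 ∧ w ^ 2 ≠ 1 := by
  have hp : p.Prime := Fact.out
  have hp4 : p ≠ 4 := by intro h; rw [h] at hp; norm_num at hp
  have hp7 : 7 ≤ p := by
    have := hp.two_le
    omega
  obtain ⟨g, hg⟩ := IsCyclic.exists_ofOrder_eq_natCard (α := (ZMod p)ˣ)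
  have hcard : Nat.card (ZMod p)ˣ = p - 1 := by
    rw [Nat.card_eq_fintype_card, ZMod.card_units_eq_totient, Nat.totient_prime hp]
  rw [hcard] at hg
  set k := (p - 1) / 3 with hk
  have hk3 : p - 1 = 3 * k := by omega
  have hkpos : 2 ≤ k := by omega
  have hord : orderOf (g ^ k) = 3 := by
    rw [orderOf_pow, hg, hk3]
    have h5 : (3 * k).gcd k = k := Nat.gcd_eq_right ⟨3, by ring⟩
    rw [h5, Nat.mul_div_cancel 3 (show 0 < k by omega)]
  refine ⟨((g ^ k : (ZMod p)ˣ) : ZMod p), ?_, ?_, ?_⟩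
  · rw [← Units.val_pow_eq_pow_val, ← hord, pow_orderOf_eq_one, Units.val_one]
  · intro h
    have : (g ^ k : (ZMod p)ˣ) = 1 := Units.ext h
    rw [this, orderOf_one] at hord
    norm_num at hord
  · intro h
    rw [← Units.val_pow_eq_pow_val] at h
    have h2 : (g ^ k : (ZMod p)ˣ) ^ 2 = 1 := Units.ext h
    have := orderOf_dvd_of_pow_eq_one h2
    rw [hord] at this
    norm_num at this

private lemma cube_fiber (hp3 : p % 3 = 1) {x : ZMod p} (hx : x ≠ 0) :
    (Finset.univ.filter fun y : ZMod p => y ^ 3 = x ^ 3).card = 3 := by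
  obtain ⟨w, hw3, hw1, hw2⟩ := exists_omega hp3
  have hw0 : w ≠ 0 := by intro h; rw [h] at hw3; simp at hw3
  have hs : w ^ 2 + w + 1 = 0 := by
    have h0 : (w - 1) * (w ^ 2 + w + 1) = 0 := by linear_combination hw3
    rcases mul_eq_zero.mp h0 with h | h
    · exact absurd (by linear_combination h) hw1
    · exact h
  have hset : (Finset.univ.filter fun y : ZMod p => y ^ 3 = x ^ 3)
      = {x, w * x, w ^ 2 * x} := by
    ext y
    simp only [Finset.mem_filter, Finset.mem_univ, true_and, Finset.mem_insert,
      Finset.mem_singleton]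
    constructor
    · intro hy
      have hz : (y - x) * (y - w * x) * (y - w ^ 2 * x) = 0 := by
        linear_combination hy + (y * x - y^2) * x * hs + (y * x^2 - x^3) * hw3
      rcases mul_eq_zero.mp hz with h | h
      · rcases mul_eq_zero.mp h with h | h
        · left; linear_combination h
        · right; left; linear_combination h
      · right; right; linear_combination h
    · rintro (rfl | rfl | rfl)
      · rfl
      · linear_combination x ^ 3 * hw3
      · linear_combination (x ^ 3 * (w ^ 3 + 1)) * hw3
  rw [hset]
  have key : ∀ a b : ZMod p, a * x = b * x → a = b := fun a b h => mul_right_cancel₀ hx h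
  have h1 : x ≠ w * x := by
    intro h
    exact hw1 (key w 1 (by rw [one_mul, ← h]))
  have h2 : x ≠ w ^ 2 * x := by
    intro h
    exact hw2 (key (w ^ 2) 1 (by rw [one_mul, ← h]))
  have h3 : w * x ≠ w ^ 2 * x := by
    intro h
    have hww := key w (w ^ 2) h
    have : w * (w - 1) = 0 := by linear_combination -hww
    rcases mul_eq_zero.mp this with h' | h'
    · exact hw0 h'
    · exact hw1 (by linear_combination h')
  rw [Finset.card_insert_of_notMem (by simp [h1, h2]),
    Finset.card_insert_of_notMem (by simp [h3]), Finset.card_singleton]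


private lemma cube_count (hp3 : p % 3 = 1) :
    ∑ x : ZMod p, ∑ y : ZMod p, (if x ^ 3 = y ^ 3 then (1 : ℤ) else 0)
      = 3 * (p : ℤ) - 2 := by
  have hterm : ∀ x : ZMod p, ∑ y : ZMod p, (if x ^ 3 = y ^ 3 then (1 : ℤ) else 0)
      = if x = 0 then 1 else 3 := by
    intro x
    rw [Finset.sum_boole]
    by_cases hx : x = 0
    · subst hx
      have : (Finset.univ.filter fun y : ZMod p => (0 : ZMod p) ^ 3 = y ^ 3)
          = {0} := by
        ext y
        simp [eq_comm, pow_eq_zero_iff]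
      rw [this]
      simp
    · have : (Finset.univ.filter fun y : ZMod p => x ^ 3 = y ^ 3)
          = Finset.univ.filter fun y : ZMod p => y ^ 3 = x ^ 3 := by
        apply Finset.filter_congr
        intro y _
        exact eq_comm
      rw [this, cube_fiber hp3 hx]
      simp [hx]
  simp_rw [hterm]
  have : ∀ x : ZMod p, (if x = 0 then (1 : ℤ) else 3) = 3 - (if x = 0 then 2 else 0) := by
    intro x; split_ifs <;> norm_num
  simp_rw [this]
  rw [Finset.sum_sub_distrib, Finset.sum_const, Finset.sum_ite_eq' Finset.univ (0 : ZMod p)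
    (fun _ => (2 : ℤ))]
  simp only [Finset.mem_univ, if_true, Finset.card_univ, ZMod.card, nsmul_eq_mul]
  ring

theorem second_moment_CM_family (p : ℕ) [Fact p.Prime] (hp3 : p % 3 = 1)
    (B : ZMod p) (hB : B ≠ 0) :
    ∑ t : ZMod p, (∑ x : ZMod p, quadraticChar (ZMod p) (x ^ 3 + B * t ^ 2)) ^ 2 =
      2 * (p : ℤ) ^ 2 - 2 * (p : ℤ) := by
  have hc : ringChar (ZMod p) ≠ 2 := by
    rw [ZMod.ringChar_zmod_n]
    omega
  have hB2 : (quadraticChar (ZMod p) B : ℤ) * quadraticChar (ZMod p) B = 1 := by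
    rcases quadraticChar_dichotomy hB with h | h <;> rw [h] <;> norm_num
  have step1 : ∑ t : ZMod p,
        (∑ x : ZMod p, quadraticChar (ZMod p) (x ^ 3 + B * t ^ 2)) ^ 2
      = ∑ a : ZMod p, ((quadraticChar (ZMod p) a : ℤ) + 1) * (gg p (B * a)) ^ 2 :=
    sum_sq_param hc (fun a => (gg p (B * a)) ^ 2)
  have step2 : ∑ a : ZMod p, ((quadraticChar (ZMod p) a : ℤ) + 1) * (gg p (B * a)) ^ 2
      = ∑ u : ZMod p, ((quadraticChar (ZMod p) B : ℤ) * quadraticChar (ZMod p) u + 1)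
          * (gg p u) ^ 2 := by
    refine Fintype.sum_bijective (fun a : ZMod p => B * a) (mulLeft_bijective₀ B hB)
      _ _ fun a => ?_
    have : (quadraticChar (ZMod p) B : ℤ) * quadraticChar (ZMod p) (B * a)
        = quadraticChar (ZMod p) a := by
      rw [map_mul, ← mul_assoc, hB2, one_mul]
    rw [this]
  have step3 : ∑ u : ZMod p, ((quadraticChar (ZMod p) B : ℤ) * quadraticChar (ZMod p) u + 1)
          * (gg p u) ^ 2
      = ∑ u : ZMod p, (gg p u) ^ 2 := by
    simp_rw [add_mul, one_mul, mul_assoc]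
    rw [Finset.sum_add_distrib, ← Finset.mul_sum, hzero hc, mul_zero, zero_add]
  have step4 : ∑ u : ZMod p, (gg p u) ^ 2
      = ∑ x : ZMod p, ∑ y : ZMod p, (if x ^ 3 = y ^ 3 then (p : ℤ) - 1 else -1) := by
    unfold gg
    simp_rw [sq, Finset.sum_mul_sum]
    rw [Finset.sum_comm]
    refine Finset.sum_congr rfl fun x _ => ?_
    rw [Finset.sum_comm]
    refine Finset.sum_congr rfl fun y _ => ?_
    rw [← shift_sum hc (x ^ 3) (y ^ 3)]
    refine Finset.sum_congr rfl fun u _ => ?_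
    rw [add_comm (x ^ 3) u, add_comm (y ^ 3) u]
  have step5 : ∑ x : ZMod p, ∑ y : ZMod p, (if x ^ 3 = y ^ 3 then (p : ℤ) - 1 else -1)
      = (p : ℤ) * (3 * (p : ℤ) - 2) - (p : ℤ) ^ 2 := by
    have hpt : ∀ x y : ZMod p, (if x ^ 3 = y ^ 3 then (p : ℤ) - 1 else -1)
        = (p : ℤ) * (if x ^ 3 = y ^ 3 then (1 : ℤ) else 0) - 1 := by
      intro x y; split_ifs <;> ring
    simp_rw [hpt, Finset.sum_sub_distrib, ← Finset.mul_sum, Finset.sum_const,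
      Finset.card_univ, ZMod.card, nsmul_eq_mul, mul_one]
    rw [cube_count hp3]
    ring
  rw [step1, step2, step3, step4, step5]
  ring
end

section
/- Let p be a prime with p ≡ 1 (mod 3). Then the sum over all c in ZMod p of the square of (the sum over all x in ZMod p of χ(x³ + c)) equals 2p² − 2p. -/
/-!
Expanding the square and summing over `c` first, each pair `(x, y)` contributes the shifted
correlation `∑_c χ(c + x³) χ(c + y³)`, which is `p - 1` when `x³ = y³` and `-1` otherwise
(a Jacobi sum `J(χ, χ⁻¹)`). Since `p ≡ 1 (mod 3)`, every nonzero cube has exactly three cube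
roots, so there are `1 + 3(p - 1)` pairs with `x³ = y³`, and the total is
`p (1 + 3(p - 1)) - p² = 2p² - 2p`.
-/

open Finset

namespace MulChar

variable {F R : Type*} [Field F] [Fintype F] [CommRing R] [IsDomain R]

theorem sum_mul_inv_add_eq_neg_one {χ : MulChar F R} (hχ : χ ≠ 1) {d : F} (hd : d ≠ 0) :
    ∑ x, χ x * χ⁻¹ (x + d) = -1 := by
  have hsubst (t : F) :
      χ (-d * t) * χ⁻¹ (-d * t + d) = χ (-1) * (χ t * χ⁻¹ (1 - t)) := by
    have hdd : χ d * χ⁻¹ d = 1 := by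
      rw [inv_apply', ← map_mul, mul_inv_cancel₀ hd, map_one]
    rw [show -d * t + d = d * (1 - t) by ring, show -d * t = -1 * d * t by ring,
      map_mul, map_mul, map_mul]
    linear_combination (χ (-1) * χ t * χ⁻¹ (1 - t)) * hdd
  calc ∑ x, χ x * χ⁻¹ (x + d)
      = ∑ t, χ (-d * t) * χ⁻¹ (-d * t + d) :=
        (Equiv.sum_comp (Equiv.mulLeft₀ (-d) (neg_ne_zero.mpr hd)) _).symm
    _ = χ (-1) * jacobiSum χ χ⁻¹ := by simp only [hsubst, ← mul_sum, jacobiSum]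
    _ = -1 := by
        rw [jacobiSum_nontrivial_inv hχ, mul_neg, ← map_mul, neg_one_mul, neg_neg, map_one]

theorem sum_add_mul_inv_add [DecidableEq F] {χ : MulChar F R} (hχ : χ ≠ 1) (a b : F) :
    ∑ c, χ (c + a) * χ⁻¹ (c + b) = (if a = b then (Fintype.card F : R) else 0) - 1 := by
  split_ifs with hab
  · subst hab
    calc ∑ c, χ (c + a) * χ⁻¹ (c + a) = ∑ y, (1 : MulChar F R) y :=
          (Equiv.sum_comp (Equiv.addRight a) (fun y => χ y * χ⁻¹ y)).trans
            (by simp only [← mul_apply, mul_inv_cancel])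
      _ = (Fintype.card F : R) - 1 := by
        rw [sum_one_eq_card_units, Fintype.card_eq_card_units_add_one (α := F)]
        push_cast
        ring
  · rw [zero_sub, ← sum_mul_inv_add_eq_neg_one hχ (sub_ne_zero.mpr (Ne.symm hab))]
    exact Fintype.sum_equiv (Equiv.addRight a) _ _ fun c => by
      simp only [Equiv.coe_addRight, add_assoc, add_sub_cancel]

end MulChar

namespace FiniteField

variable {F : Type*} [Field F] [Fintype F] {n : ℕ}

theorem exists_isPrimitiveRoot_of_dvd (hn : n ∣ Fintype.card F - 1) :
    ∃ ζ : F, IsPrimitiveRoot ζ n := by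
  classical
  obtain ⟨g, hg⟩ := IsCyclic.exists_ofOrder_eq_natCard (α := Fˣ)
  obtain ⟨k, hk⟩ := hn
  have hg' : IsPrimitiveRoot (g : F) (n * k) := by
    rw [← hk, ← Fintype.card_units, ← Nat.card_eq_fintype_card, ← hg]
    exact IsPrimitiveRoot.coe_units_iff.mpr (IsPrimitiveRoot.orderOf g)
  exact ⟨(g : F) ^ k, hg'.pow (hk ▸ Nat.sub_pos_of_lt Fintype.one_lt_card) (mul_comm n k)⟩

theorem card_pow_eq_pow [DecidableEq F] (hn : n ∣ Fintype.card F - 1) (x : F) :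
    #{y : F | y ^ n = x ^ n} = if x = 0 then 1 else n := by
  have hn0 : 0 < n := Nat.pos_of_dvd_of_pos hn (Nat.sub_pos_of_lt Fintype.one_lt_card)
  obtain ⟨ζ, hζ⟩ := exists_isPrimitiveRoot_of_dvd hn
  split_ifs with hx
  · subst hx
    simp only [zero_pow hn0.ne', pow_eq_zero_iff hn0.ne', filter_eq', mem_univ, if_true,
      card_singleton]
  · refine (card_nbij' (· / x) (· * x) ?_ ?_ ?_ ?_).trans hζ.card_nthRootsFinset
    · intro y hy
      simp_all [div_pow]
    · intro z hz
      simp_all [mul_pow]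
    · intro y _
      simp [hx]
    · intro z _
      simp [hx]

end FiniteField

section QuadraticChar

variable {F : Type*} [Field F] [Fintype F] [DecidableEq F]

theorem quadraticChar_sum_add_mul_add (hF : ringChar F ≠ 2) (a b : F) :
    ∑ c, quadraticChar F (c + a) * quadraticChar F (c + b) =
      (if a = b then (Fintype.card F : ℤ) else 0) - 1 := by
  simpa only [(quadraticChar_isQuadratic F).inv] using
    MulChar.sum_add_mul_inv_add (quadraticChar_ne_one hF) a b

theorem sum_sq_sum_quadraticChar_pow_add {n : ℕ} (hF : ringChar F ≠ 2)
    (hn : n ∣ Fintype.card F - 1) :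
    ∑ c : F, (∑ x : F, quadraticChar F (x ^ n + c)) ^ 2 =
      ((n : ℤ) - 1) * Fintype.card F * (Fintype.card F - 1) := by
  calc ∑ c : F, (∑ x : F, quadraticChar F (x ^ n + c)) ^ 2
      = ∑ x : F, ∑ y : F, ∑ c : F,
          quadraticChar F (c + x ^ n) * quadraticChar F (c + y ^ n) := by
        simp_rw [sq, sum_mul_sum, add_comm _ (_ : F)]
        rw [sum_comm]
        exact sum_congr rfl fun x _ => sum_comm
    _ = ∑ x : F, ∑ y : F, ((if y ^ n = x ^ n then (Fintype.card F : ℤ) else 0) - 1) := by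
        simp only [quadraticChar_sum_add_mul_add hF, eq_comm]
    _ = ∑ x : F, (if x = 0 then 0 else ((n : ℤ) - 1) * Fintype.card F) := by
        refine sum_congr rfl fun x _ => ?_
        rw [sum_sub_distrib, ← sum_filter, sum_const, sum_const, FiniteField.card_pow_eq_pow hn]
        split_ifs
        · simp
        · simp only [Int.nsmul_eq_mul, card_univ, mul_one]
          ring
    _ = ((n : ℤ) - 1) * Fintype.card F * (Fintype.card F - 1) := by
        rw [sum_ite, sum_const_zero, zero_add, sum_const, filter_ne',
          card_erase_of_mem (mem_univ _), card_univ, nsmul_eq_mul, Nat.cast_pred Fintype.card_pos]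
        ring

end QuadraticChar

theorem second_moment_cubic_family (p : ℕ) [Fact p.Prime] (hp3 : p % 3 = 1) :
    ∑ c : ZMod p, (∑ x : ZMod p, quadraticChar (ZMod p) (x ^ 3 + c)) ^ 2 =
      2 * (p : ℤ) ^ 2 - 2 * (p : ℤ) := by
  have hchar : ringChar (ZMod p) ≠ 2 := by
    rw [ZMod.ringChar_zmod_n]
    omega
  have hdvd : 3 ∣ Fintype.card (ZMod p) - 1 := by
    rw [ZMod.card]
    omega
  rw [sum_sq_sum_quadraticChar_pow_add hchar hdvd, ZMod.card]
  ring
end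

section
/- Let p be a prime with p ≡ 1 (mod 4). Then the double sum over all t in ZMod p and all x in ZMod p of χ(x³ − t·(t − 1)·x) equals 2p. -/
/-!
Over a finite field `F` of odd order `q`, completing the square in `t` gives
`x³ - t(t-1)x = x((x² + 1/4) - (t - 1/2)²)`, and `∑ₛ χ(c - s²)` is `-χ(-1)` for `c ≠ 0`
(a Jacobi sum) and `(q - 1)χ(-1)` for `c = 0`. As `∑ₓ χ(x) = 0`, only the `x` with
`x² = -1/4` survive, each with weight `q χ(-1) χ(x)`. Such an `x` is the square of
`(1 + 2x)/2`, and there are `1 + χ(-1)` of them, so the double sum is `q (1 + χ(-1))`,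
which is `2p` for `F = ZMod p` with `p ≡ 1 mod 4`.
-/

open Finset

lemma Ring.four_ne_zero {R : Type*} [Ring R] [NoZeroDivisors R] [Nontrivial R]
    (hR : ringChar R ≠ 2) : (4 : R) ≠ 0 := by
  simpa only [two_mul, two_add_two_eq_four] using
    mul_ne_zero (Ring.two_ne_zero hR) (Ring.two_ne_zero hR)

namespace FiniteField

variable {F : Type*} [Field F] [Fintype F] [DecidableEq F]

local notation "χ" => quadraticChar F

lemma sum_comp_sq (hF : ringChar F ≠ 2) (f : F → ℤ) :
    ∑ s : F, f (s ^ 2) = ∑ u : F, (χ u + 1) * f u := by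
  rw [← Finset.sum_fiberwise' univ (· ^ 2) f]
  refine sum_congr rfl fun u _ => ?_
  rw [sum_const, nsmul_eq_mul, ← quadraticChar_card_sqrts hF u, Set.toFinset_ofPred]

lemma sum_quadraticChar_mul_sub (hF : ringChar F ≠ 2) {c : F} (hc : c ≠ 0) :
    ∑ u : F, χ u * χ (c - u) = -χ (-1) := by
  have hJ : jacobiSum χ χ = -χ (-1) := by
    simpa only [(quadraticChar_isQuadratic F).inv] using
      jacobiSum_nontrivial_inv (quadraticChar_ne_one hF)
  calc ∑ u : F, χ u * χ (c - u)
      = ∑ v : F, χ (c * v) * χ (c * (1 - v)) := by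
        simp only [mul_sub, mul_one]
        exact (Fintype.sum_equiv (Equiv.mulLeft₀ c hc) _ _ fun v => rfl).symm
    _ = χ c ^ 2 * jacobiSum χ χ := by
        simp only [jacobiSum, mul_sum, map_mul]
        exact sum_congr rfl fun v _ => by ring
    _ = -χ (-1) := by rw [quadraticChar_sq_one hc, one_mul, hJ]

lemma sum_quadraticChar_sq : ∑ u : F, χ u ^ 2 = Fintype.card F - 1 := by
  have hsq (u : F) : χ u ^ 2 = 1 - if u = 0 then 1 else 0 := by
    split_ifs with hu
    · simp [hu]
    · rw [sub_zero, quadraticChar_sq_one hu]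
  simp only [hsq, sum_sub_distrib, sum_ite_eq', mem_univ, if_true, sum_const, card_univ,
    nsmul_eq_mul, mul_one]

lemma sum_quadraticChar_sub_sq (hF : ringChar F ≠ 2) (c : F) :
    ∑ s : F, χ (c - s ^ 2) = χ (-1) * ((if c = 0 then (Fintype.card F : ℤ) else 0) - 1) := by
  have hshift : ∑ u : F, χ (c - u) = 0 :=
    ((Equiv.subLeft c).sum_comp χ).trans (quadraticChar_sum_zero hF)
  rw [sum_comp_sq hF (fun u => χ (c - u))]
  simp only [add_mul, one_mul, sum_add_distrib, hshift, add_zero]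
  split_ifs with hc
  · subst hc
    have hneg (u : F) : χ u * χ (0 - u) = χ (-1) * χ u ^ 2 := by
      rw [zero_sub, neg_eq_neg_one_mul, map_mul]; ring
    simp only [hneg, ← mul_sum, sum_quadraticChar_sq]
  · rw [sum_quadraticChar_mul_sub hF hc]; ring

lemma sum_quadraticChar_cubic_eq_mul_sum_sub_sq (hF : ringChar F ≠ 2) (x : F) :
    ∑ t : F, χ (x ^ 3 - t * (t - 1) * x) = χ x * ∑ s : F, χ ((x ^ 2 + 4⁻¹) - s ^ 2) := by
  have h2 : (2 : F) ≠ 0 := Ring.two_ne_zero hF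
  have h4 : (4 : F) ≠ 0 := Ring.four_ne_zero hF
  have hsq (t : F) : x ^ 3 - t * (t - 1) * x = x * ((x ^ 2 + 4⁻¹) - (t - 2⁻¹) ^ 2) := by
    field_simp; ring
  simp only [hsq, map_mul, ← mul_sum]
  exact congrArg _ ((Equiv.subRight (2⁻¹ : F)).sum_comp fun s => χ ((x ^ 2 + 4⁻¹) - s ^ 2))

lemma quadraticChar_eq_one_of_sq_eq_neg_inv_four (hF : ringChar F ≠ 2) {x : F}
    (hx : x ^ 2 = -4⁻¹) : χ x = 1 := by
  have h2 : (2 : F) ≠ 0 := Ring.two_ne_zero hF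
  have h4 : (4 : F) ≠ 0 := Ring.four_ne_zero hF
  have h4x : 4 * x ^ 2 = -1 := by rw [hx]; field_simp
  have hx0 : x ≠ 0 := by
    rintro rfl
    simp at h4x
  have hsq : x = ((1 + 2 * x) / 2) ^ 2 := by
    field_simp
    linear_combination -h4x
  rw [hsq]
  exact quadraticChar_sq_one' fun h => hx0 (by rw [hsq, h]; ring)

lemma sum_quadraticChar_sqrts_neg_inv_four (hF : ringChar F ≠ 2) :
    ∑ x : F with x ^ 2 = -4⁻¹, χ x = χ (-1) + 1 := by
  have hχ4 : χ (-4⁻¹) = χ (-1) := by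
    rw [show (-4⁻¹ : F) = -1 * (2⁻¹) ^ 2 by norm_num, map_mul,
      quadraticChar_sq_one' (inv_ne_zero (Ring.two_ne_zero hF)), mul_one]
  rw [sum_congr rfl fun x hx =>
      quadraticChar_eq_one_of_sq_eq_neg_inv_four hF (mem_filter.mp hx).2,
    sum_const, nsmul_one, ← hχ4, ← quadraticChar_card_sqrts hF, Set.toFinset_ofPred]

theorem sum_sum_quadraticChar_cubic (hF : ringChar F ≠ 2) :
    ∑ t : F, ∑ x : F, χ (x ^ 3 - t * (t - 1) * x) = Fintype.card F * (1 + χ (-1)) := by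
  have hterm (x : F) :
      χ x * (χ (-1) * ((if x ^ 2 = -4⁻¹ then (Fintype.card F : ℤ) else 0) - 1)) =
        χ (-1) * Fintype.card F * (if x ^ 2 = -4⁻¹ then χ x else 0) - χ (-1) * χ x := by
    split_ifs <;> ring
  have hχ2 : χ (-1) ^ 2 = 1 := quadraticChar_sq_one (neg_ne_zero.mpr one_ne_zero)
  rw [sum_comm]
  simp only [sum_quadraticChar_cubic_eq_mul_sum_sub_sq hF, sum_quadraticChar_sub_sq hF,
    add_eq_zero_iff_eq_neg]
  rw [sum_congr rfl fun x _ => hterm x, sum_sub_distrib, ← mul_sum, ← mul_sum, ← sum_filter,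
    sum_quadraticChar_sqrts_neg_inv_four hF, quadraticChar_sum_zero hF]
  linear_combination (Fintype.card F : ℤ) * hχ2

end FiniteField

theorem first_moment_rank_one_family (p : ℕ) [Fact p.Prime] (hp4 : p % 4 = 1) :
    ∑ t : ZMod p, ∑ x : ZMod p,
      quadraticChar (ZMod p) (x ^ 3 - t * (t - 1) * x) = 2 * (p : ℤ) := by
  have hchar : ringChar (ZMod p) ≠ 2 := by
    rw [ZMod.ringChar_zmod_n]; omega
  rw [FiniteField.sum_sum_quadraticChar_cubic hchar, quadraticChar_neg_one hchar, ZMod.card,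
    ZMod.χ₄_nat_one_mod_four hp4]
  ring
end

section
/- Let p be a prime with p ≡ 1 (mod 4), and let u be an element of ZMod p satisfying 1 + 4·u² = 0. Then u is a square in ZMod p. -/
theorem root_of_one_add_four_sq_is_square (p : ℕ) [Fact p.Prime] (hp4 : p % 4 = 1)
    (u : ZMod p) (hu : 1 + 4 * u ^ 2 = 0) : IsSquare u := by
  have hp : p.Prime := Fact.out
  have hp2 : p ≠ 2 := by omega
  have h5 : 5 ≤ p := by
    have := hp.two_le
    omega
  -- u ≠ 0
  have hu0 : u ≠ 0 := by
    rintro rfl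
    simp at hu
  rw [ZMod.euler_criterion p hu0]
  -- u^2 = -(4⁻¹)
  have h4 : (4 : ZMod p) ≠ 0 := by
    intro h
    have : ((4 : ℕ) : ZMod p) = 0 := by push_cast; exact h
    rw [ZMod.natCast_eq_zero_iff] at this
    have := Nat.le_of_dvd (by norm_num) this
    omega
  have hsq : u ^ 2 = -(4 : ZMod p)⁻¹ := by
    field_simp
    linear_combination hu
  set m := p / 4 with hm
  have hpd : p / 2 = 2 * m := by omega
  have key : u ^ (p / 2) = (-1) ^ m * ((4 : ZMod p) ^ m)⁻¹ := by
    rw [hpd, pow_mul, hsq, neg_pow, inv_pow]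
  rw [key]
  -- 4^m = 2^(p/2)
  have h4m : (4 : ZMod p) ^ m = (2 : ZMod p) ^ (p / 2) := by
    rw [hpd, pow_mul]
    norm_num
  -- 2^(p/2) = χ₈ p
  have h2 : ((2 : ZMod p)) ^ (p / 2) = ((ZMod.χ₈ (p : ZMod 8) : ℤ) : ZMod p) := by
    have := legendreSym.eq_pow p 2
    have ht := legendreSym.at_two hp2
    rw [ht] at this
    exact_mod_cast this.symm
  have hχ : (ZMod.χ₈ (p : ZMod 8) : ℤ) = (-1) ^ m := by
    have h8 : p % 8 = 1 ∨ p % 8 = 5 := by omega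
    have hcast : ((p : ZMod 8)) = ((p % 8 : ℕ) : ZMod 8) := by
      rw [ZMod.natCast_mod]
    rcases h8 with h | h
    · rw [hcast, h]
      have hme : m % 2 = 0 := by omega
      rw [← Nat.div_add_mod m 2, hme]
      simp [ZMod.χ₈]
    · rw [hcast, h]
      have hme : m % 2 = 1 := by omega
      rw [← Nat.div_add_mod m 2, hme]
      simp [pow_add, pow_mul, ZMod.χ₈]
  rw [h4m, h2, hχ]
  push_cast
  have hne : ((-1 : ZMod p)) ^ m ≠ 0 := by
    apply pow_ne_zero
    intro h
    have : (1 : ZMod p) = 0 := by linear_combination -h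
    exact one_ne_zero this
  field_simp
end

section
/- Let p be a prime with p ≥ 5. Then the sum, over all t in ZMod p with (6t − 1)·(6t + 1) ≠ 0, of the sum over all x in ZMod p of χ(x³ − 3x + 12t), equals χ(3) + χ(−3). -/
/-!
Summed over all `t`, the inner sums cancel: for fixed `x`, the argument `x³ - 3x + 12t` runs over
the whole field as `t` does. So the sum over the good `t` is minus the contribution of the two bad
fibres `12t = ±2`, where the cubic acquires a double root, `x³ - 3x ± 2 = (x ± 1)² (x ∓ 2)`; away
from the double root `χ((x - a)² (x - b)) = χ(x - b)`, so such a fibre contributes `-χ(a - b)`.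
-/

open Finset

section

variable {F : Type*} [Field F] [Fintype F] [DecidableEq F]

theorem quadraticChar_sum_add_mul_eq_zero (hF : ringChar F ≠ 2) (b : F) {a : F} (ha : a ≠ 0) :
    ∑ u : F, quadraticChar F (b + a * u) = 0 := by
  rw [← quadraticChar_sum_zero hF]
  exact Fintype.sum_bijective (fun u => b + a * u)
    ((add_right_injective b).comp (mul_right_injective₀ ha)).bijective_of_finite _ _ fun _ => rfl

theorem quadraticChar_sum_sq_mul (hF : ringChar F ≠ 2) (a b : F) :
    ∑ x : F, quadraticChar F ((x - a) ^ 2 * (x - b)) = -quadraticChar F (a - b) := by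
  have hshift : ∑ x : F, quadraticChar F (x - b) = 0 := by
    simpa [sub_eq_neg_add] using quadraticChar_sum_add_mul_eq_zero hF (-b) one_ne_zero
  have hpointwise : ∀ x : F, quadraticChar F ((x - a) ^ 2 * (x - b)) =
      quadraticChar F (x - b) - if x = a then quadraticChar F (x - b) else 0 := by
    intro x
    by_cases hx : x = a
    · simp [hx]
    · rw [if_neg hx, sub_zero, map_mul, quadraticChar_sq_one' (sub_ne_zero.mpr hx), one_mul]
  simp_rw [hpointwise, sum_sub_distrib, hshift, sum_ite_eq', mem_univ, if_true, zero_sub]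

theorem sum_sum_quadraticChar_cubic_eq_zero (hF : ringChar F ≠ 2) :
    ∑ u : F, ∑ x : F, quadraticChar F (x ^ 3 - 3 * x + 2 * u) = 0 := by
  rw [sum_comm]
  exact sum_eq_zero fun x _ =>
    quadraticChar_sum_add_mul_eq_zero hF (x ^ 3 - 3 * x) (Ring.two_ne_zero hF)

theorem filter_not_mul_sub_one_mul_add_one_ne_zero :
    univ.filter (fun u : F => ¬(u - 1) * (u + 1) ≠ 0) = {1, -1} := by
  ext u
  simp only [ne_eq, not_not, mem_filter, mem_univ, true_and, mul_eq_zero, sub_eq_zero,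
    add_eq_zero_iff_eq_neg, mem_insert, mem_singleton]

theorem sum_filter_sum_quadraticChar_cubic (hF : ringChar F ≠ 2) :
    ∑ u ∈ univ.filter (fun u : F => (u - 1) * (u + 1) ≠ 0),
      ∑ x : F, quadraticChar F (x ^ 3 - 3 * x + 2 * u) =
      quadraticChar F 3 + quadraticChar F (-3) := by
  have hsplit := sum_filter_add_sum_filter_not univ (fun u : F => (u - 1) * (u + 1) ≠ 0)
    fun u => ∑ x : F, quadraticChar F (x ^ 3 - 3 * x + 2 * u)
  have hone : ∑ x : F, quadraticChar F (x ^ 3 - 3 * x + 2 * 1) = -quadraticChar F 3 := by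
    simp_rw [show ∀ x : F, x ^ 3 - 3 * x + 2 * 1 = (x - 1) ^ 2 * (x - -2) from fun x => by ring,
      quadraticChar_sum_sq_mul hF]
    norm_num
  have hneg_one : ∑ x : F, quadraticChar F (x ^ 3 - 3 * x + 2 * -1) = -quadraticChar F (-3) := by
    simp_rw [show ∀ x : F, x ^ 3 - 3 * x + 2 * -1 = (x - -1) ^ 2 * (x - 2) from fun x => by ring,
      quadraticChar_sum_sq_mul hF]
    norm_num
  have hne : (1 : F) ≠ -1 := fun h => Ring.two_ne_zero hF (by linear_combination h)
  rw [sum_sum_quadraticChar_cubic_eq_zero hF, filter_not_mul_sub_one_mul_add_one_ne_zero,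
    sum_pair hne, hone, hneg_one] at hsplit
  linarith

theorem sum_filter_sum_quadraticChar_cubic_twelve (hF : ringChar F ≠ 2) (h3 : (3 : F) ≠ 0) :
    ∑ t ∈ univ.filter (fun t : F => (6 * t - 1) * (6 * t + 1) ≠ 0),
      ∑ x : F, quadraticChar F (x ^ 3 - 3 * x + 12 * t) =
      quadraticChar F 3 + quadraticChar F (-3) := by
  have h6 : (6 : F) ≠ 0 := by
    simpa [show (6 : F) = 2 * 3 by norm_num] using ⟨Ring.two_ne_zero hF, h3⟩
  set g : F → ℤ := fun u =>
    if (u - 1) * (u + 1) ≠ 0 then ∑ x : F, quadraticChar F (x ^ 3 - 3 * x + 2 * u) else 0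
  calc _ = ∑ t : F, g (6 * t) := by
        rw [sum_filter]
        simp_rw [g, show ∀ t : F, 2 * (6 * t) = 12 * t from fun t => by ring]
    _ = ∑ u : F, g u := Equiv.sum_comp (Equiv.mulLeft₀ 6 h6) g
    _ = _ := by rw [← sum_filter_sum_quadraticChar_cubic hF, sum_filter]

end

theorem first_moment_nonCM_family (p : ℕ) [Fact p.Prime] (hp : 5 ≤ p) :
    ∑ t ∈ Finset.univ.filter (fun t : ZMod p => (6 * t - 1) * (6 * t + 1) ≠ 0),
      ∑ x : ZMod p, quadraticChar (ZMod p) (x ^ 3 - 3 * x + 12 * t) =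
      quadraticChar (ZMod p) 3 + quadraticChar (ZMod p) (-3) := by
  have hp3 : ¬p ∣ 3 := fun h => by have := Nat.le_of_dvd three_pos h; omega
  refine sum_filter_sum_quadraticChar_cubic_twelve (by rw [ZMod.ringChar_zmod_n]; omega) ?_
  exact_mod_cast (ZMod.natCast_eq_zero_iff 3 p).not.mpr hp3
end

section
/- Let p be a real number with p > 1. Then the series ∑_{ℓ=0}^∞ (centralBinom (ℓ+2))·(p/(p+1)²)^{ℓ+2} converges and equals 2·(3p + 1) / ((p − 1)·(p+1)²). -/
/-!
The generating function of the central binomial coefficients is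
`∑ C(2n, n) xⁿ = (1 - 4x)^(-1/2)` for `|x| < 1/4`: this is the binomial series of
`(1 - y)^(-1/2)` at `y = 4x`, whose coefficients are `C(n - 1/2, n) = C(2n, n) / 4ⁿ`.
At `x = p / (p + 1)²` one has `1 - 4x = ((p - 1) / (p + 1))²`, so the full series sums to
`(p + 1) / (p - 1)`, and removing the terms `1 + 2x` leaves the stated value.
-/

open Polynomial

theorem four_pow_mul_ascPochhammer_eval_half (n : ℕ) :
    4 ^ n * (ascPochhammer ℝ n).eval 2⁻¹ = n.centralBinom * n.factorial := by
  induction n with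
  | zero => simp
  | succ n ih =>
    have h : ((n + 1 : ℕ) : ℝ) * (n + 1).centralBinom = 2 * (2 * n + 1) * n.centralBinom := by
      exact_mod_cast n.succ_mul_centralBinom_succ
    rw [ascPochhammer_succ_eval, Nat.factorial_succ]
    push_cast at h ⊢
    linear_combination 2 * (2 * n + 1) * ih - n.factorial * h

theorem Ring.choose_half_add_sub_one (n : ℕ) :
    Ring.choose (2⁻¹ + n - 1 : ℝ) n = n.centralBinom / 4 ^ n := by
  have h := Ring.factorial_nsmul_multichoose_eq_ascPochhammer (2⁻¹ : ℝ) n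
  rw [ascPochhammer_smeval_eq_eval, nsmul_eq_mul, Ring.multichoose_eq] at h
  have hf : (n.factorial : ℝ) ≠ 0 := by positivity
  rw [eq_div_iff (by positivity)]
  apply mul_left_cancel₀ hf
  linear_combination 4 ^ n * h + four_pow_mul_ascPochhammer_eval_half n

theorem hasSum_centralBinom_mul_pow {x : ℝ} (hx : |x| < 4⁻¹) :
    HasSum (fun n => (n.centralBinom : ℝ) * x ^ n) (√(1 - 4 * x))⁻¹ := by
  have h4x : 4 * x ∈ Metric.eball (0 : ℝ) 1 := by
    rw [Metric.mem_eball, ← ENNReal.ofReal_one, edist_lt_ofReal, Real.dist_0_eq_abs, abs_mul]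
    norm_num
    linarith
  have h := (Real.one_div_one_sub_rpow_hasFPowerSeriesOnBall_zero 2⁻¹).hasSum h4x
  have hterm (n : ℕ) :
      (n.centralBinom : ℝ) / 4 ^ n * (4 ^ n * x ^ n) = n.centralBinom * x ^ n := by
    field_simp
  simp only [FormalMultilinearSeries.ofScalars_apply_eq, Ring.choose_half_add_sub_one, zero_add,
    smul_eq_mul, mul_pow, hterm] at h
  rwa [Real.sqrt_eq_rpow, one_div 2, inv_eq_one_div]

theorem hasSum_centralBinom_add_two_mul_pow {x : ℝ} (hx : |x| < 4⁻¹) :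
    HasSum (fun n => ((n + 2).centralBinom : ℝ) * x ^ (n + 2)) ((√(1 - 4 * x))⁻¹ - 1 - 2 * x) := by
  have h := (hasSum_nat_add_iff' 2).mpr (hasSum_centralBinom_mul_pow hx)
  simpa [Finset.sum_range_succ, sub_sub, Nat.centralBinom] using h

theorem sqrt_one_sub_four_mul_div_add_one_sq {p : ℝ} (hp : 1 ≤ p) :
    √(1 - 4 * (p / (p + 1) ^ 2)) = (p - 1) / (p + 1) := by
  have hp1 : 0 < p + 1 := by linarith
  rw [show 1 - 4 * (p / (p + 1) ^ 2) = ((p - 1) / (p + 1)) ^ 2 by field_simp; ring]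
  exact Real.sqrt_sq (div_nonneg (by linarith) hp1.le)

theorem centralBinom_tail_at_prime_weight (p : ℝ) (hp : 1 < p) :
    HasSum (fun l : ℕ => (Nat.centralBinom (l + 2) : ℝ) * (p / (p + 1) ^ 2) ^ (l + 2))
      (2 * (3 * p + 1) / ((p - 1) * (p + 1) ^ 2)) := by
  have hx : |p / (p + 1) ^ 2| < 4⁻¹ := by
    rw [abs_of_nonneg (by positivity), div_lt_iff₀ (by positivity)]
    nlinarith [sq_nonneg (p - 1)]
  have h := hasSum_centralBinom_add_two_mul_pow hx
  rw [sqrt_one_sub_four_mul_div_add_one_sq hp.le] at h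
  convert h using 1
  have hp1 : p - 1 ≠ 0 := by linarith
  field_simp
  ring
end

section
/- Let ℓ ≥ 1 be a natural number and let x be a real number with |x| < 1. Then the series ∑_{k=0}^∞ (∏_{j=0}^{ℓ−1} (k² − j²))·x^k converges and equals ((2ℓ)!/2) · x^ℓ·(1 + x) / (1 − x)^{2ℓ+1}. -/
/-!
Write `l = m + 1` and `(s)_n = s (s - 1) ⋯ (s - n + 1)` for the falling factorial. Since
`(t + m)_(2m+1) = (t + m) ⋯ (t - m)`, we have `∏_{j ≤ m} (t² - j²) = t · (t + m)_(2m+1)`, and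
`(t + m + 1)_(2m+2)`, `(t + m)_(2m+2)` are this falling factorial times `t + m + 1` and `t - m - 1`;
adding them gives twice the product. The two resulting series are shifted negative binomial series:
`∑ₖ (k + a)_b xᵏ = b! x^(b - a) / (1 - x)^(b + 1)` for `a ≤ b`, the terms with `k + a < b` vanishing.
-/

open Finset Polynomial

theorem descPochhammer_succ_eval_add_one {R : Type*} [CommRing R] (n : ℕ) (s : R) :
    (descPochhammer R (n + 1)).eval (s + 1) = (s + 1) * (descPochhammer R n).eval s := by
  rw [descPochhammer_succ_left, eval_mul, eval_comp]
  simp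

theorem prod_range_succ_sq_sub_sq_eq {R : Type*} [CommRing R] (t : R) (m : ℕ) :
    ∏ j ∈ range (m + 1), (t ^ 2 - (j : R) ^ 2) =
      t * (descPochhammer R (2 * m + 1)).eval (t + m) := by
  induction m with
  | zero => simp [sq]
  | succ m ih =>
    have hstep : (descPochhammer R (2 * m + 1 + 1 + 1)).eval (t + m + 1) =
        (t + m + 1) * (descPochhammer R (2 * m + 1)).eval (t + m) * (t - (m + 1)) := by
      rw [descPochhammer_succ_eval, descPochhammer_succ_eval_add_one]
      push_cast
      ring
    rw [prod_range_succ, ih, show 2 * (m + 1) + 1 = 2 * m + 1 + 1 + 1 by ring, Nat.cast_succ,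
      ← add_assoc, hstep]
    ring

theorem two_mul_prod_range_succ_sq_sub_sq {R : Type*} [CommRing R] (t : R) (m : ℕ) :
    2 * ∏ j ∈ range (m + 1), (t ^ 2 - (j : R) ^ 2) =
      (descPochhammer R (2 * m + 2)).eval (t + (m + 1 : ℕ)) +
        (descPochhammer R (2 * m + 2)).eval (t + m) := by
  rw [prod_range_succ_sq_sub_sq_eq, Nat.cast_succ, ← add_assoc,
    show 2 * m + 2 = 2 * m + 1 + 1 by ring, descPochhammer_succ_eval_add_one,
    descPochhammer_succ_eval (2 * m + 1)]
  push_cast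
  ring

theorem hasSum_choose_add_mul_geometric {𝕜 : Type*} [NormedField 𝕜] {a b : ℕ} (hab : a ≤ b)
    {x : 𝕜} (hx : ‖x‖ < 1) :
    HasSum (fun k : ℕ => ((k + a).choose b : 𝕜) * x ^ k) (x ^ (b - a) / (1 - x) ^ (b + 1)) := by
  rw [← hasSum_nat_add_iff' (b - a)]
  have hvanish : ∑ k ∈ range (b - a), ((k + a).choose b : 𝕜) * x ^ k = 0 :=
    sum_eq_zero fun k hk => by
      rw [Nat.choose_eq_zero_of_lt (by simp at hk; omega), Nat.cast_zero, zero_mul]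
  rw [hvanish, sub_zero, div_eq_mul_inv, mul_comm, ← one_div]
  refine ((hasSum_choose_mul_geometric_of_norm_lt_one b hx).mul_right (x ^ (b - a))).congr_fun
    fun n => ?_
  rw [show n + (b - a) + a = n + b by omega, pow_add, mul_assoc]

theorem hasSum_descPochhammer_eval_add_mul_geometric {𝕜 : Type*} [NormedField 𝕜] {a b : ℕ}
    (hab : a ≤ b) {x : 𝕜} (hx : ‖x‖ < 1) :
    HasSum (fun k : ℕ => (descPochhammer 𝕜 b).eval ((k : 𝕜) + a) * x ^ k)
      (b.factorial * (x ^ (b - a) / (1 - x) ^ (b + 1))) := by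
  refine ((hasSum_choose_add_mul_geometric hab hx).mul_left (b.factorial : 𝕜)).congr_fun
    fun k => ?_
  rw [← Nat.cast_add, descPochhammer_eval_eq_descFactorial,
    Nat.descFactorial_eq_factorial_mul_choose]
  push_cast
  ring

theorem polylog_combination_even (l : ℕ) (hl : 1 ≤ l) (x : ℝ) (hx : |x| < 1) :
    HasSum (fun k : ℕ => (∏ j ∈ Finset.range l, ((k : ℝ) ^ 2 - (j : ℝ) ^ 2)) * x ^ k)
      (((2 * l).factorial : ℝ) / 2 * (x ^ l * (1 + x) / (1 - x) ^ (2 * l + 1))) := by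
  obtain ⟨m, rfl⟩ : ∃ m, l = m + 1 := ⟨l - 1, by omega⟩
  rw [← Real.norm_eq_abs] at hx
  have hsum := ((hasSum_descPochhammer_eval_add_mul_geometric (b := 2 * m + 2) (a := m + 1)
    (by omega) hx).add (hasSum_descPochhammer_eval_add_mul_geometric (b := 2 * m + 2) (a := m)
    (by omega) hx)).div_const 2
  rw [show 2 * m + 2 - (m + 1) = m + 1 by omega, show 2 * m + 2 - m = m + 2 by omega] at hsum
  rw [show 2 * (m + 1) = 2 * m + 2 by ring, show ((2 * m + 2).factorial : ℝ) / 2 *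
      (x ^ (m + 1) * (1 + x) / (1 - x) ^ (2 * m + 2 + 1)) =
        ((2 * m + 2).factorial * (x ^ (m + 1) / (1 - x) ^ (2 * m + 2 + 1)) +
          (2 * m + 2).factorial * (x ^ (m + 2) / (1 - x) ^ (2 * m + 2 + 1))) / 2 by ring]
  refine hsum.congr_fun fun k => ?_
  rw [← add_mul, ← two_mul_prod_range_succ_sq_sub_sq]
  ring
end
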